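/- arXiv:2504.13663 — 3 statements merged into one kernel-verified Lean document; each statement's English description precedes it below -/
import Mathlib

section
/- Let X be a reflexive real Banach space whose closed unit ball B_X equals the convex hull of its set of exposed points, and let Y be a real Banach space in which the only left symmetric point with respect to Birkhoff–James orthogonality is 0. Then the only compact bounded linear operator from X to Y that is a left symmetric point of K(X,Y) with respect to Birkhoff–James orthogonality is the zero operator. -/
/-!
A compact operator `T` on a reflexive space attains its norm, and since the unit ball is the convex
hull of its exposed points, it attains it at an exposed point `x`, exposed by a functional `f`.
If `T x ⊥_B z` then `T ⊥_B f ⊗ z` (`f.smulRight z`), so `f ⊗ z ⊥_B T` by left symmetry of `T`. Were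
`‖z + t • T x‖ < ‖z‖`, the compact operators `f ⊗ z + (s t) T`, `s → 0⁺`, would attain their norms
at vectors `w_s` with `f w_s ≥ 0`; weak compactness of the ball and exposedness of `x` force
`w_s → x` weakly, hence `T w_s → T x` in norm, and convexity of the norm on the segment from `z`
to `z + t • T x` then gives `‖f ⊗ z + (s t) T‖ < ‖z‖ = ‖f ⊗ z‖` for small `s`, contradicting
`f ⊗ z ⊥_B T`. So `T x` is left symmetric, hence `0`, and `‖T‖ = ‖T x‖ = 0`.
-/

open Filter Topology Set Metric NormedSpace

noncomputable section

/-- Birkhoff–James orthogonality: `x ⊥_B y` iff `‖x + t • y‖ ≥ ‖x‖` for all real `t`. -/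
def BJOrth {E : Type*} [NormedAddCommGroup E] [NormedSpace ℝ E] (x y : E) : Prop :=
  ∀ t : ℝ, ‖x‖ ≤ ‖x + t • y‖

/-- The norm derivative `ρ'₊(x,y) = ‖x‖ · lim_{t→0⁺} (‖x+ty‖-‖x‖)/t`. -/
def rhoPlus {E : Type*} [NormedAddCommGroup E] [NormedSpace ℝ E] (x y : E) : ℝ :=
  ‖x‖ * limUnder (𝓝[>] (0 : ℝ)) (fun t => (‖x + t • y‖ - ‖x‖) / t)

/-- The norm derivative `ρ'₋(x,y) = ‖x‖ · lim_{t→0⁻} (‖x+ty‖-‖x‖)/t`. -/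
def rhoMinus {E : Type*} [NormedAddCommGroup E] [NormedSpace ℝ E] (x y : E) : ℝ :=
  ‖x‖ * limUnder (𝓝[<] (0 : ℝ)) (fun t => (‖x + t • y‖ - ‖x‖) / t)

/-- The norm derivative `ρ'(x,y) = (ρ'₊(x,y) + ρ'₋(x,y))/2`. -/
def rhoDer {E : Type*} [NormedAddCommGroup E] [NormedSpace ℝ E] (x y : E) : ℝ :=
  (rhoPlus x y + rhoMinus x y) / 2

/-- `x` is an exposed point of the closed unit ball of `E`: there is a norm-one functional `f`
with `f x = 1` and `f u < 1` for every `u` in the ball with `u ≠ x`. -/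
def ExposedPt {E : Type*} [NormedAddCommGroup E] [NormedSpace ℝ E] (x : E) : Prop :=
  ‖x‖ ≤ 1 ∧ ∃ f : E →L[ℝ] ℝ, ‖f‖ = 1 ∧ f x = 1 ∧ ∀ u : E, ‖u‖ ≤ 1 → u ≠ x → f u < 1

section

variable {X Y : Type*} [NormedAddCommGroup X] [NormedSpace ℝ X]
  [NormedAddCommGroup Y] [NormedSpace ℝ Y]

theorem isCompact_toWeakSpace_closedBall
    (hrefl : Function.Surjective (inclusionInDoubleDual ℝ X)) :
    IsCompact (toWeakSpace ℝ X '' closedBall (0 : X) 1) := by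
  have hrange : range (inclusionInDoubleDualWeak ℝ X) = univ := by
    refine eq_univ_of_forall fun φ => ?_
    obtain ⟨x, hx⟩ := hrefl (StrongDual.toWeakDual.symm φ)
    exact ⟨toWeakSpace ℝ X x, DFunLike.ext _ _ fun g => DFunLike.congr_fun hx g⟩
  have h := isCompact_closure_of_isBounded ℝ X (toWeakSpace ℝ X '' closedBall (0 : X) 1)
    (by rw [preimage_image_eq _ (toWeakSpace ℝ X).injective]; exact isBounded_closedBall)
    (hrange ▸ subset_univ _)
  rwa [← (convex_closedBall (0 : X) 1).toWeakSpace_closure ℝ, isClosed_closedBall.closure_eq] at h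

theorem exists_forall_tendsto_dual_of_norm_le_one
    (hrefl : Function.Surjective (inclusionInDoubleDual ℝ X))
    {ι : Type*} (U : Ultrafilter ι) {w : ι → X} (hw : ∀ i, ‖w i‖ ≤ 1) :
    ∃ w₀ : X, ‖w₀‖ ≤ 1 ∧
      ∀ g : StrongDual ℝ X, Tendsto (fun i => g (w i)) U (𝓝 (g w₀)) := by
  obtain ⟨-, ⟨w₀, hw₀, rfl⟩, hlim⟩ := (isCompact_toWeakSpace_closedBall hrefl).ultrafilter_le_nhds
    (U.map (toWeakSpace ℝ X ∘ w)) (le_principal_iff.2 <| mem_map.2 <|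
      univ_mem' fun i => ⟨w i, mem_closedBall_zero_iff.2 (hw i), rfl⟩)
  refine ⟨w₀, mem_closedBall_zero_iff.1 hw₀, fun g => ?_⟩
  exact ((WeakBilin.eval_continuous (topDualPairing ℝ X).flip g).tendsto _).comp hlim

theorem IsCompactOperator.exists_tendsto_of_norm_le_one
    (hrefl : Function.Surjective (inclusionInDoubleDual ℝ X))
    {T : X →L[ℝ] Y} (hT : IsCompactOperator T)
    {ι : Type*} (U : Ultrafilter ι) {w : ι → X} (hw : ∀ i, ‖w i‖ ≤ 1) :
    ∃ w₀ : X, ‖w₀‖ ≤ 1 ∧ (∀ g : StrongDual ℝ X, Tendsto (fun i => g (w i)) U (𝓝 (g w₀))) ∧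
      Tendsto (fun i => T (w i)) U (𝓝 (T w₀)) := by
  obtain ⟨w₀, hw₀, hweak⟩ := exists_forall_tendsto_dual_of_norm_le_one hrefl U hw
  obtain ⟨y, -, hy⟩ := (hT.isCompact_closure_image_closedBall 1).ultrafilter_le_nhds
    (U.map fun i => T (w i)) (le_principal_iff.2 <| mem_map.2 <|
      univ_mem' fun i => subset_closure ⟨w i, mem_closedBall_zero_iff.2 (hw i), rfl⟩)
  -- `y` is the norm limit and `T w₀` the weak limit of `T (w i)`; functionals separate points
  have hyT : y = T w₀ := SeparatingDual.eq_iff_forall_dual_eq.2 fun g =>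
    tendsto_nhds_unique ((g.continuous.tendsto y).comp hy) (hweak (g.comp T))
  exact ⟨w₀, hw₀, hweak, hyT ▸ hy⟩

theorem IsCompactOperator.exists_norm_apply_eq_opNorm
    (hrefl : Function.Surjective (inclusionInDoubleDual ℝ X))
    {T : X →L[ℝ] Y} (hT : IsCompactOperator T) :
    ∃ x : X, ‖x‖ ≤ 1 ∧ ‖T x‖ = ‖T‖ := by
  have hlt : ∀ r : ℝ, ∃ x : X, ‖x‖ ≤ 1 ∧ (r < ‖T‖ → r < ‖T x‖) := fun r => by
    by_cases hr : r < ‖T‖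
    · obtain ⟨x, hx, hrx⟩ := T.exists_lt_apply_of_lt_opNorm hr
      exact ⟨x, hx.le, fun _ => hrx⟩
    · exact ⟨0, by simp, fun h => absurd h hr⟩
  choose x hx hrx using hlt
  let U := Ultrafilter.of (𝓝[<] ‖T‖)
  have hU : (U : Filter ℝ) ≤ 𝓝[<] ‖T‖ := Ultrafilter.of_le _
  obtain ⟨x₀, hx₀, -, hTx₀⟩ := hT.exists_tendsto_of_norm_le_one hrefl U hx
  refine ⟨x₀, hx₀, le_antisymm (T.unit_le_opNorm x₀ hx₀) ?_⟩
  exact le_of_tendsto_of_tendsto (tendsto_id.mono_left (hU.trans nhdsWithin_le_nhds))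
    hTx₀.norm (Filter.mem_of_superset (hU self_mem_nhdsWithin) fun r hr => (hrx r hr).le)

theorem IsCompactOperator.exists_norm_apply_eq_opNorm_of_nonneg
    (hrefl : Function.Surjective (inclusionInDoubleDual ℝ X))
    {T : X →L[ℝ] Y} (hT : IsCompactOperator T) (f : StrongDual ℝ X) :
    ∃ x : X, ‖x‖ ≤ 1 ∧ 0 ≤ f x ∧ ‖T x‖ = ‖T‖ := by
  obtain ⟨x, hx, hTx⟩ := hT.exists_norm_apply_eq_opNorm hrefl
  rcases le_total 0 (f x) with hfx | hfx
  · exact ⟨x, hx, hfx, hTx⟩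
  · exact ⟨-x, by rwa [norm_neg], by simpa using hfx, by rwa [map_neg, norm_neg]⟩

theorem IsCompactOperator.exists_exposedPt_norm_apply_eq_opNorm
    (hrefl : Function.Surjective (inclusionInDoubleDual ℝ X))
    (hball : {x : X | ‖x‖ ≤ 1} = convexHull ℝ {x : X | ExposedPt x})
    {T : X →L[ℝ] Y} (hT : IsCompactOperator T) :
    ∃ x : X, ExposedPt x ∧ ‖T x‖ = ‖T‖ := by
  obtain ⟨x₀, hx₀, hTx₀⟩ := hT.exists_norm_apply_eq_opNorm hrefl
  by_contra! h
  -- the open sublevel set `{‖T ·‖ < ‖T‖}` is convex, contains every exposed point, hence the ball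
  have hlt : {x : X | ‖x‖ ≤ 1} ⊆ T ⁻¹' ball 0 ‖T‖ := by
    rw [hball]
    refine convexHull_min (fun x hx => ?_) ((convex_ball 0 ‖T‖).linear_preimage T.toLinearMap)
    exact mem_ball_zero_iff.2 ((T.unit_le_opNorm x hx.1).lt_of_ne (h x hx))
  exact (mem_ball_zero_iff.1 (hlt hx₀)).ne hTx₀

theorem isCompactOperator_smulRight (f : StrongDual ℝ X) (z : Y) :
    IsCompactOperator (f.smulRight z) :=
  (isCompactOperator_of_locallyCompactSpace_dom f).continuous_comp
    (continuous_id.smul continuous_const)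

theorem bjOrth_smulRight_of_norm_apply_eq {T : X →L[ℝ] Y} {x : X} {f : StrongDual ℝ X}
    (hx : ‖x‖ ≤ 1) (hfx : f x = 1) (hTx : ‖T x‖ = ‖T‖) {z : Y} (hz : BJOrth (T x) z) :
    BJOrth T (f.smulRight z) := fun t =>
  calc ‖T‖ = ‖T x‖ := hTx.symm
    _ ≤ ‖T x + t • z‖ := hz t
    _ = ‖(T + t • f.smulRight z) x‖ := by simp [hfx]
    _ ≤ ‖T + t • f.smulRight z‖ := (T + t • f.smulRight z).unit_le_opNorm x hx

theorem norm_smul_add_mul_smul_le {a s : ℝ} (hs : 0 ≤ s) (hsa : s ≤ a) (ha : a ≤ 1)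
    (t : ℝ) (z y y' : Y) :
    ‖a • z + (s * t) • y'‖ ≤ ‖z‖ - s * (‖z‖ - ‖z + t • y‖) + s * (|t| * ‖y' - y‖) := by
  have hsplit : a • z + (s * t) • y' = (a - s) • z + s • (z + t • y) + (s * t) • (y' - y) := by
    module
  calc ‖a • z + (s * t) • y'‖
      ≤ ‖(a - s) • z‖ + ‖s • (z + t • y)‖ + ‖(s * t) • (y' - y)‖ := hsplit ▸ norm_add₃_le
    _ = (a - s) * ‖z‖ + s * ‖z + t • y‖ + s * (|t| * ‖y' - y‖) := by
      rw [norm_smul, norm_smul, norm_smul, Real.norm_of_nonneg (sub_nonneg.2 hsa),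
        Real.norm_of_nonneg hs, Real.norm_eq_abs, abs_mul, abs_of_nonneg hs, mul_assoc]
    _ ≤ ‖z‖ - s * (‖z‖ - ‖z + t • y‖) + s * (|t| * ‖y' - y‖) := by
      nlinarith [norm_nonneg z]

theorem bjOrth_apply_of_smulRight_bjOrth
    (hrefl : Function.Surjective (inclusionInDoubleDual ℝ X))
    {T : X →L[ℝ] Y} (hT : IsCompactOperator T) {x : X} {f : StrongDual ℝ X}
    (hf : ‖f‖ = 1) (hfx : f x = 1) (hexp : ∀ u : X, ‖u‖ ≤ 1 → u ≠ x → f u < 1)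
    {z : Y} (hzT : BJOrth (f.smulRight z) T) : BJOrth z (T x) := by
  intro t
  by_contra! hlt
  have hz : 0 < ‖z‖ := (norm_nonneg _).trans_lt hlt
  have hf_le : ∀ u : X, ‖u‖ ≤ 1 → f u ≤ 1 := fun u hu =>
    (le_abs_self _).trans (by simpa [hf] using f.unit_le_opNorm u hu)
  have hnorming : ∀ s : ℝ, ∃ w : X, ‖w‖ ≤ 1 ∧ 0 ≤ f w ∧ ‖z‖ ≤ ‖f w • z + (s * t) • T w‖ := by
    intro s
    have hcompact : IsCompactOperator (f.smulRight z + (s * t) • T) :=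
      (isCompactOperator_smulRight f z).add (hT.smul (s * t))
    obtain ⟨w, hw, hfw, hnorm⟩ := hcompact.exists_norm_apply_eq_opNorm_of_nonneg hrefl f
    refine ⟨w, hw, hfw, ?_⟩
    calc ‖z‖ = ‖f.smulRight z‖ := by rw [ContinuousLinearMap.norm_smulRight_apply, hf, one_mul]
      _ ≤ ‖f.smulRight z + (s * t) • T‖ := hzT (s * t)
      _ = ‖f w • z + (s * t) • T w‖ := hnorm.symm
  choose w hw hfw hzw using hnorming
  let U := Ultrafilter.of (𝓝[>] (0 : ℝ))
  have hU : (U : Filter ℝ) ≤ 𝓝[>] 0 := Ultrafilter.of_le _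
  have hpos : ∀ᶠ s in (U : Filter ℝ), 0 < s := hU self_mem_nhdsWithin
  have hs : Tendsto id (U : Filter ℝ) (𝓝 0) := tendsto_id'.2 (hU.trans nhdsWithin_le_nhds)
  obtain ⟨w₀, hw₀, hfw₀, hTw₀⟩ := hT.exists_tendsto_of_norm_le_one hrefl U hw
  -- along `U` the norming vectors converge weakly to `x`, the only point of the ball where `f = 1`
  have hfw₀_nonneg : 0 ≤ f w₀ := ge_of_tendsto' (hfw₀ f) hfw
  have hlim : Tendsto (fun s => ‖f (w s) • z + (s * t) • T (w s)‖) U (𝓝 (f w₀ * ‖z‖)) := by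
    have := (((hfw₀ f).smul_const z).add ((hs.mul_const t).smul hTw₀)).norm
    simpa [norm_smul, abs_of_nonneg hfw₀_nonneg] using this
  have hw₀x : w₀ = x := by
    by_contra hne
    have h1 : ‖z‖ ≤ f w₀ * ‖z‖ := ge_of_tendsto' hlim hzw
    nlinarith [hexp w₀ hw₀ hne]
  subst hw₀x
  have hev : ∀ᶠ s in U, 0 < s ∧ s < f (w s) ∧ |t| * ‖T (w s) - T w₀‖ < ‖z‖ - ‖z + t • T w₀‖ := by
    refine hpos.and ((hs.eventually_lt (hfw₀ f) (by simp [hfx])).and ?_)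
    have h0 : Tendsto (fun s => |t| * ‖T (w s) - T w₀‖) U (𝓝 0) := by
      simpa using ((hTw₀.sub_const (T w₀)).norm).const_mul |t|
    exact h0.eventually (gt_mem_nhds (sub_pos.2 hlt))
  obtain ⟨s, hs0, hsf, hclose⟩ := hev.exists
  have hle := norm_smul_add_mul_smul_le hs0.le hsf.le (hf_le _ (hw s)) t z (T w₀) (T (w s))
  nlinarith [hzw s, mul_lt_mul_of_pos_left hclose hs0]

end

theorem stmt1_general {X Y : Type*} [NormedAddCommGroup X] [NormedSpace ℝ X]
    [NormedAddCommGroup Y] [NormedSpace ℝ Y]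
    (hrefl : Function.Surjective (NormedSpace.inclusionInDoubleDual ℝ X))
    (hball : {x : X | ‖x‖ ≤ 1} = convexHull ℝ {x : X | ExposedPt x})
    (hY : ∀ y : Y, (∀ z : Y, BJOrth y z → BJOrth z y) → y = 0) :
    ∀ T : X →L[ℝ] Y, IsCompactOperator T →
      (∀ S : X →L[ℝ] Y, IsCompactOperator S → BJOrth T S → BJOrth S T) → T = 0 := by
  intro T hT hsym
  obtain ⟨x, ⟨hx, f, hf, hfx, hexp⟩, hTx⟩ := hT.exists_exposedPt_norm_apply_eq_opNorm hrefl hball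
  have hTx0 : T x = 0 := hY (T x) fun z hz =>
    bjOrth_apply_of_smulRight_bjOrth hrefl hT hf hfx hexp <|
      hsym _ (isCompactOperator_smulRight f z) (bjOrth_smulRight_of_norm_apply_eq hx hfx hTx hz)
  rwa [hTx0, norm_zero, eq_comm, norm_eq_zero] at hTx

theorem stmt1 {X Y : Type*} [NormedAddCommGroup X] [NormedSpace ℝ X] [CompleteSpace X]
    [NormedAddCommGroup Y] [NormedSpace ℝ Y] [CompleteSpace Y]
    (hrefl : Function.Surjective (NormedSpace.inclusionInDoubleDual ℝ X))
    (hball : {x : X | ‖x‖ ≤ 1} = convexHull ℝ {x : X | ExposedPt x})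
    (hY : ∀ y : Y, (∀ z : Y, BJOrth y z → BJOrth z y) → y = 0) :
    ∀ T : X →L[ℝ] Y, IsCompactOperator T →
      (∀ S : X →L[ℝ] Y, IsCompactOperator S → BJOrth T S → BJOrth S T) → T = 0 :=
  stmt1_general hrefl hball hY
end
end

section
/- Let X and Y be reflexive real Banach spaces such that the closed unit ball of the dual Y* equals the convex hull of its set of exposed points. Suppose T : X → Y is a compact bounded linear operator that is a left symmetric point of K(X,Y) with respect to Birkhoff–James orthogonality. Then for every y* ∈ M_{T*} that is an exposed point of the closed unit ball of Y*, the functional T*(y*) is a left symmetric point of X* with respect to Birkhoff–James orthogonality, where T* : Y* → X* denotes the adjoint operator. -/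
open Filter Topology Set Metric NormedSpace

noncomputable section

/-- The Banach-space adjoint `T* : Y* → X*`, `T* y* = y* ∘ T`. -/
def opAdjoint {X Y : Type*} [NormedAddCommGroup X] [NormedSpace ℝ X]
    [NormedAddCommGroup Y] [NormedSpace ℝ Y] (T : X →L[ℝ] Y) :
    StrongDual ℝ Y →L[ℝ] StrongDual ℝ X :=
  (ContinuousLinearMap.compL ℝ X Y ℝ).flip T

/-!
James's Hahn–Banach characterization of `T*φ ⊥ ψ` gives a unit vector `x` (by reflexivity of `X`)
with `ψ x = 0` and `T*φ x = ‖T*φ‖ ≥ ‖T‖`. Hence `T ⊥ ψ ⊗ y₀`, where `y₀ ∈ Y` exposes `φ`, and left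
symmetry of `T` gives `‖ψ‖ = ‖ψ ⊗ y₀‖ ≤ ‖ψ ⊗ y₀ + t T‖`. Since `φ` is weak-star exposed by `y₀`,
functionals of norm at most one that almost attain `1` at `y₀` are uniformly close to `φ` on the
compact set `closure (T B_X)`; this yields `‖ψ ⊗ y₀ + t T‖ ≤ ‖ψ + t T*φ‖ + o(t)`. So
`‖ψ‖ ≤ ‖ψ + t T*φ‖ + o(t)`, and convexity of the norm upgrades this to `ψ ⊥ T*φ`.
-/

section BJOrth

variable {E : Type*} [NormedAddCommGroup E] [NormedSpace ℝ E] {x y : E}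

theorem BJOrth.exists_dual (h : BJOrth x y) :
    ∃ F : StrongDual ℝ E, ‖F‖ ≤ 1 ∧ F y = 0 ∧ F x = ‖x‖ := by
  set M := ℝ ∙ y
  have hx : ‖(Submodule.Quotient.mk x : E ⧸ M)‖ = ‖x‖ := by
    refine le_antisymm (Submodule.Quotient.norm_mk_le M x) ?_
    refine (QuotientAddGroup.le_norm_iff (S := M.toAddSubgroup)).2 fun m hm ↦ ?_
    obtain ⟨a, ha⟩ := Submodule.mem_span_singleton.1 ((Submodule.Quotient.eq M).1 hm)
    rw [show m = x + a • y by rw [ha]; abel]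
    exact h a
  obtain ⟨g, hg, hgx⟩ := exists_dual_vector'' ℝ (Submodule.Quotient.mk x : E ⧸ M)
  refine ⟨g.comp M.mkQL, ?_, ?_, ?_⟩
  · refine ContinuousLinearMap.opNorm_le_bound _ zero_le_one fun z ↦ ?_
    calc ‖g (Submodule.Quotient.mk z)‖ ≤ 1 * ‖(Submodule.Quotient.mk z : E ⧸ M)‖ :=
          g.le_of_opNorm_le hg _
      _ ≤ 1 * ‖z‖ := by gcongr; exact Submodule.Quotient.norm_mk_le M z
  · simp [(Submodule.Quotient.mk_eq_zero M).2 (Submodule.mem_span_singleton_self y)]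
  · simpa [hx] using hgx

theorem BJOrth.of_forall_eventually
    (h : ∀ ε > 0, ∀ᶠ t in 𝓝 (0 : ℝ), ‖x‖ ≤ ‖x + t • y‖ + ε * |t|) : BJOrth x y := by
  intro s
  suffices ∀ ε > 0, ‖x‖ ≤ ‖x + s • y‖ + ε * |s| by
    refine le_of_forall_pos_le_add fun ε hε ↦ (this (ε / (|s| + 1)) (by positivity)).trans ?_
    gcongr
    rw [div_mul_eq_mul_div, div_le_iff₀ (by positivity)]
    nlinarith [abs_nonneg s]
  intro ε hε
  have hθ : Tendsto (fun θ : ℝ ↦ θ * s) (𝓝[>] 0) (𝓝 0) := by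
    simpa using (tendsto_id.mul_const s).mono_left (nhdsWithin_le_nhds (a := (0 : ℝ)))
  obtain ⟨θ, hθε, hθ0, hθ1⟩ :=
    ((hθ.eventually (h ε hε)).and (Ioo_mem_nhdsGT zero_lt_one)).exists
  have hconv : ‖x + (θ * s) • y‖ ≤ (1 - θ) * ‖x‖ + θ * ‖x + s • y‖ := by
    have := (convexOn_norm convex_univ).2 (mem_univ x) (mem_univ (x + s • y))
      (sub_nonneg.2 hθ1.le) hθ0.le (by ring)
    rw [smul_eq_mul, smul_eq_mul] at this
    rwa [show x + (θ * s) • y = (1 - θ) • x + θ • (x + s • y) by module]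
  rw [abs_mul, abs_of_pos hθ0] at hθε
  nlinarith

end BJOrth

theorem exists_eq_apply_of_surjective_inclusionInDoubleDual {E : Type*} [NormedAddCommGroup E]
    [NormedSpace ℝ E] (hrefl : Function.Surjective (inclusionInDoubleDual ℝ E))
    (F : StrongDual ℝ (StrongDual ℝ E)) : ∃ x : E, ‖x‖ = ‖F‖ ∧ ∀ f, F f = f x := by
  obtain ⟨x, rfl⟩ := hrefl F
  exact ⟨x, ((inclusionInDoubleDualLi ℝ).norm_map x).symm, fun _ ↦ rfl⟩

section Operator

variable {X Y : Type*} [NormedAddCommGroup X] [NormedSpace ℝ X]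
  [NormedAddCommGroup Y] [NormedSpace ℝ Y]

@[simp]
theorem opAdjoint_apply (T : X →L[ℝ] Y) (φ : StrongDual ℝ Y) (x : X) :
    opAdjoint T φ x = φ (T x) := rfl

theorem norm_le_norm_opAdjoint (T : X →L[ℝ] Y) : ‖T‖ ≤ ‖opAdjoint T‖ :=
  T.opNorm_le_bound (ContinuousLinearMap.opNorm_nonneg _) fun x ↦
    norm_le_dual_bound ℝ (T x) (by positivity) fun g ↦
      calc ‖g (T x)‖ = ‖opAdjoint T g x‖ := rfl
        _ ≤ ‖opAdjoint T‖ * ‖g‖ * ‖x‖ :=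
          (opAdjoint T g).le_of_opNorm_le ((opAdjoint T).le_opNorm g) x
        _ = ‖opAdjoint T‖ * ‖x‖ * ‖g‖ := by ring

theorem isCompactOperator_smulRight_s3 (ψ : StrongDual ℝ X) (y : Y) :
    IsCompactOperator (ψ.smulRight y) :=
  (isCompactOperator_of_locallyCompactSpace_dom ψ).continuous_comp
    (continuous_id.smul continuous_const)

theorem bjOrth_of_apply_eq_zero {T S : X →L[ℝ] Y} {x : X} (hx : ‖x‖ ≤ 1) (hTx : ‖T‖ ≤ ‖T x‖)
    (hSx : S x = 0) : BJOrth T S := fun t ↦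
  calc ‖T‖ ≤ ‖(T + t • S) x‖ := by simpa [hSx] using hTx
    _ ≤ ‖T + t • S‖ := (T + t • S).unit_le_opNorm x hx

end Operator

section Exposed

variable {Y : Type*} [NormedAddCommGroup Y] [NormedSpace ℝ Y] {φ : StrongDual ℝ Y} {y₀ : Y}
  {ε : ℝ}

theorem eventually_abs_sub_lt_of_exposes
    (hexp : ∀ g : StrongDual ℝ Y, ‖g‖ ≤ 1 → g ≠ φ → g y₀ < 1) (v : Y) (hε : 0 < ε) :
    ∀ᶠ s in 𝓝[<] (1 : ℝ), ∀ g : StrongDual ℝ Y, ‖g‖ ≤ 1 → s < g y₀ → |g v - φ v| < ε := by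
  let A : Set (WeakDual ℝ Y) :=
    WeakDual.toStrongDual ⁻¹' closedBall 0 1 ∩ {g | ε ≤ |g v - φ v|}
  have hA : IsCompact A := (WeakDual.isCompact_closedBall 0 1).inter_right <|
    isClosed_le continuous_const ((WeakDual.eval_continuous v).sub continuous_const).abs
  -- by weak-star compactness, `g ↦ g y₀` stays below some `c < 1` on `A`
  obtain ⟨c, hc1, hcA⟩ : ∃ c < 1, ∀ g ∈ A, g y₀ ≤ c := by
    rcases A.eq_empty_or_nonempty with hA0 | hA0
    · exact ⟨0, one_pos, by simp [hA0]⟩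
    obtain ⟨g₀, hg₀, hmax⟩ := hA.exists_isMaxOn hA0 (WeakDual.eval_continuous y₀).continuousOn
    refine ⟨g₀ y₀, hexp (WeakDual.toStrongDual g₀) (mem_closedBall_zero_iff.1 hg₀.1)
      fun h ↦ hε.not_ge ?_, hmax⟩
    simpa [← h] using hg₀.2
  filter_upwards [Ioo_mem_nhdsLT hc1] with s hs g hg hgs
  by_contra! h
  have := hcA (StrongDual.toWeakDual g) ⟨by simpa using hg, h⟩
  exact (hs.1.trans hgs).not_ge this

theorem eventually_forall_abs_sub_lt_of_exposes (hφ : ‖φ‖ ≤ 1)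
    (hexp : ∀ g : StrongDual ℝ Y, ‖g‖ ≤ 1 → g ≠ φ → g y₀ < 1) {K : Set Y} (hK : IsCompact K)
    (hε : 0 < ε) :
    ∀ᶠ s in 𝓝[<] (1 : ℝ), ∀ g : StrongDual ℝ Y, ‖g‖ ≤ 1 → s < g y₀ →
      ∀ k ∈ K, |g k - φ k| < ε := by
  obtain ⟨V, -, hV, hKV⟩ := hK.finite_cover_balls (e := ε / 3) (by positivity)
  filter_upwards [hV.eventually_all.2 fun v _ ↦
    eventually_abs_sub_lt_of_exposes hexp v (ε := ε / 3) (by positivity)] with s hs g hg hgs k hk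
  obtain ⟨v, hv, hkv⟩ := mem_iUnion₂.1 (hKV hk)
  have hkv' : ‖k - v‖ < ε / 3 := by rwa [← dist_eq_norm]
  have hg' : |g (k - v)| ≤ ‖k - v‖ := by simpa using g.le_of_opNorm_le hg (k - v)
  have hφ' : |φ (k - v)| ≤ ‖k - v‖ := by simpa using φ.le_of_opNorm_le hφ (k - v)
  have hgv := hs v hv g hg hgs
  rw [map_sub] at hg' hφ'
  calc |g k - φ k| = |(g k - g v) + (g v - φ v) + (φ v - φ k)| := by ring_nf
    _ ≤ |g k - g v| + |g v - φ v| + |φ v - φ k| := abs_add_three ..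
    _ < ε := by rw [abs_sub_comm (φ v)]; linarith

end Exposed

section RankOne

variable {X Y : Type*} [NormedAddCommGroup X] [NormedSpace ℝ X]
  [NormedAddCommGroup Y] [NormedSpace ℝ Y] {T : X →L[ℝ] Y} {ψ : StrongDual ℝ X}
  {φ g : StrongDual ℝ Y} {y₀ : Y} {u : X}

theorem apply_smulRight_add_smul_apply (t : ℝ) :
    g ((ψ.smulRight y₀ + t • T) u) = ψ u * g y₀ + t * g (T u) := by
  simp

theorem apply_smulRight_add_smul_apply_le (hu : ‖u‖ ≤ 1) (hψu : 0 ≤ ψ u)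
    (hgy : g y₀ ≤ 1) (t : ℝ) :
    g ((ψ.smulRight y₀ + t • T) u) ≤
      ‖ψ + t • opAdjoint T φ‖ + |t| * |g (T u) - φ (T u)| := by
  have hval : ψ u + t * φ (T u) ≤ ‖ψ + t • opAdjoint T φ‖ := by
    simpa using (le_abs_self _).trans ((ψ + t • opAdjoint T φ).unit_le_opNorm u hu)
  have hrest : ψ u * (g y₀ - 1) + t * (g (T u) - φ (T u)) ≤ |t| * |g (T u) - φ (T u)| := by
    rw [← abs_mul]
    nlinarith [le_abs_self (t * (g (T u) - φ (T u)))]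
  calc g ((ψ.smulRight y₀ + t • T) u)
      = (ψ u + t * φ (T u)) + (ψ u * (g y₀ - 1) + t * (g (T u) - φ (T u))) := by
        rw [apply_smulRight_add_smul_apply]; ring
    _ ≤ _ := add_le_add hval hrest

theorem apply_smulRight_add_smul_apply_le_of_le (hg : ‖g‖ ≤ 1) (hu : ‖u‖ ≤ 1) (hψu : 0 ≤ ψ u)
    {s : ℝ} (hs : 0 ≤ s) (hgs : g y₀ ≤ s) (t : ℝ) :
    g ((ψ.smulRight y₀ + t • T) u) ≤ ‖ψ‖ * s + |t| * ‖T‖ := by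
  have hψ : ψ u ≤ ‖ψ‖ := (le_abs_self _).trans (ψ.unit_le_opNorm u hu)
  have hgT : |g (T u)| ≤ ‖T‖ :=
    (g.le_of_opNorm_le hg (T u)).trans (by simpa using T.unit_le_opNorm u hu)
  rw [apply_smulRight_add_smul_apply]
  have hT : t * g (T u) ≤ |t| * ‖T‖ :=
    (le_abs_self _).trans (by rw [abs_mul]; exact mul_le_mul_of_nonneg_left hgT (abs_nonneg t))
  nlinarith

theorem eventually_norm_smulRight_add_smul_le (hT : IsCompactOperator T) (hψ : ψ ≠ 0)
    (hφ : ‖φ‖ ≤ 1) (hy₀ : ‖y₀‖ ≤ 1)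
    (hexp : ∀ g : StrongDual ℝ Y, ‖g‖ ≤ 1 → g ≠ φ → g y₀ < 1) {ε : ℝ} (hε : 0 < ε) :
    ∀ᶠ t in 𝓝 (0 : ℝ), ‖ψ.smulRight y₀ + t • T‖ ≤ ‖ψ + t • opAdjoint T φ‖ + ε * |t| := by
  obtain ⟨s, hs, hs0, hs1⟩ := ((eventually_forall_abs_sub_lt_of_exposes hφ hexp
    (hT.isCompact_closure_image_closedBall 1) hε).and (Ioo_mem_nhdsLT zero_lt_one)).exists
  have hsmall : ∀ᶠ t in 𝓝 (0 : ℝ), |t| * (‖T‖ + ‖opAdjoint T φ‖) < ‖ψ‖ * (1 - s) := by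
    have : Tendsto (fun t : ℝ ↦ |t| * (‖T‖ + ‖opAdjoint T φ‖)) (𝓝 0) (𝓝 0) := by
      simpa using (continuous_abs.tendsto (0 : ℝ)).mul_const (‖T‖ + ‖opAdjoint T φ‖)
    exact this.eventually (gt_mem_nhds (by have := norm_pos_iff.2 hψ; nlinarith))
  filter_upwards [hsmall] with t ht
  suffices key : ∀ u : X, ‖u‖ ≤ 1 → 0 ≤ ψ u →
      ‖(ψ.smulRight y₀ + t • T) u‖ ≤ ‖ψ + t • opAdjoint T φ‖ + ε * |t| by
    refine ContinuousLinearMap.opNorm_le_of_unit_norm (by positivity) fun u hu ↦ ?_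
    rcases le_total 0 (ψ u) with h | h
    · exact key u hu.le h
    · simpa only [map_neg, norm_neg] using key (-u) (by simpa using hu.le) (by simpa using h)
  intro u hu hψu
  obtain ⟨g, hg, hgw⟩ := exists_dual_vector'' ℝ ((ψ.smulRight y₀ + t • T) u)
  rw [RCLike.ofReal_real_eq_id, id] at hgw
  rw [← hgw]
  have hgy : g y₀ ≤ 1 := (le_abs_self _).trans ((g.unit_le_opNorm y₀ hy₀).trans hg)
  rcases lt_or_ge s (g y₀) with hgs | hgs
  · have hTu : T u ∈ closure (T '' closedBall 0 1) :=
      subset_closure ⟨u, mem_closedBall_zero_iff.2 hu, rfl⟩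
    have := hs g hg hgs (T u) hTu
    refine (apply_smulRight_add_smul_apply_le (φ := φ) hu hψu hgy t).trans ?_
    nlinarith [abs_nonneg t]
  · have := norm_le_add_norm_add ψ (t • opAdjoint T φ)
    rw [norm_smul, Real.norm_eq_abs] at this
    refine (apply_smulRight_add_smul_apply_le_of_le hg hu hψu hs0.le hgs t).trans ?_
    nlinarith [abs_nonneg t]

end RankOne

theorem stmt3_general {X Y : Type*} [NormedAddCommGroup X] [NormedSpace ℝ X]
    [NormedAddCommGroup Y] [NormedSpace ℝ Y]
    (hreflX : Function.Surjective (NormedSpace.inclusionInDoubleDual ℝ X))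
    (hreflY : Function.Surjective (NormedSpace.inclusionInDoubleDual ℝ Y))
    (T : X →L[ℝ] Y) (hTc : IsCompactOperator T)
    (hleft : ∀ S : X →L[ℝ] Y, IsCompactOperator S → BJOrth T S → BJOrth S T) :
    ∀ φ : StrongDual ℝ Y,
      (‖φ‖ = 1 ∧ ‖opAdjoint T φ‖ = ‖opAdjoint T‖) → ExposedPt φ →
      ∀ ψ : StrongDual ℝ X,
        BJOrth (opAdjoint T φ) ψ → BJOrth ψ (opAdjoint T φ) := by
  rintro φ ⟨hφ, hφT⟩ ⟨-, f, hf, -, hfφ⟩ ψ hψφ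
  rcases eq_or_ne ψ 0 with rfl | hψ
  · intro t; simp
  obtain ⟨F, hF, hFψ, hFφ⟩ := hψφ.exists_dual
  obtain ⟨x, hx, hxF⟩ := exists_eq_apply_of_surjective_inclusionInDoubleDual hreflX F
  obtain ⟨y₀, hy₀, hy₀f⟩ := exists_eq_apply_of_surjective_inclusionInDoubleDual hreflY f
  have hexp : ∀ g : StrongDual ℝ Y, ‖g‖ ≤ 1 → g ≠ φ → g y₀ < 1 := fun g hg hgφ ↦
    hy₀f g ▸ hfφ g hg hgφ
  have hTS : BJOrth T (ψ.smulRight y₀) := by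
    refine bjOrth_of_apply_eq_zero (hx.trans_le hF) ?_ (by simp [← hxF, hFψ])
    calc ‖T‖ ≤ ‖opAdjoint T φ‖ := hφT ▸ norm_le_norm_opAdjoint T
      _ = φ (T x) := by rw [← opAdjoint_apply, ← hxF, hFφ]
      _ ≤ ‖T x‖ := (le_abs_self _).trans (by simpa using φ.le_of_opNorm_le hφ.le (T x))
  have hST := hleft _ (isCompactOperator_smulRight_s3 ψ y₀) hTS
  refine BJOrth.of_forall_eventually fun ε hε ↦ ?_
  filter_upwards [eventually_norm_smulRight_add_smul_le hTc hψ hφ.le (by rw [hy₀, hf]) hexp hε]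
    with t ht
  calc ‖ψ‖ = ‖ψ.smulRight y₀‖ := by rw [ContinuousLinearMap.norm_smulRight_apply, hy₀, hf, mul_one]
    _ ≤ _ := hST t
    _ ≤ _ := ht

theorem stmt3 {X Y : Type*} [NormedAddCommGroup X] [NormedSpace ℝ X] [CompleteSpace X]
    [NormedAddCommGroup Y] [NormedSpace ℝ Y] [CompleteSpace Y]
    (hreflX : Function.Surjective (NormedSpace.inclusionInDoubleDual ℝ X))
    (hreflY : Function.Surjective (NormedSpace.inclusionInDoubleDual ℝ Y))
    (hball : {φ : StrongDual ℝ Y | ‖φ‖ ≤ 1} =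
        convexHull ℝ {φ : StrongDual ℝ Y | ExposedPt φ})
    (T : X →L[ℝ] Y) (hTc : IsCompactOperator T)
    (hleft : ∀ S : X →L[ℝ] Y, IsCompactOperator S → BJOrth T S → BJOrth S T) :
    ∀ φ : StrongDual ℝ Y,
      (‖φ‖ = 1 ∧ ‖opAdjoint T φ‖ = ‖opAdjoint T‖) → ExposedPt φ →
      ∀ ψ : StrongDual ℝ X,
        BJOrth (opAdjoint T φ) ψ → BJOrth ψ (opAdjoint T φ) :=
  stmt3_general hreflX hreflY T hTc hleft
end
end

section
/- Let K be a nonempty set, X a real Banach space, and let f ∈ ℓ∞(K,X) with ‖f‖ = 1. Suppose that (i) there exists a point k₀ ∈ K such that ‖f(k₀)‖ = 1 and f(k) = 0 for all k ∈ K with k ≠ k₀, and (ii) f(k₀) is a (ρ₊)-left symmetric point of X. Then f is a (ρ₊)-left symmetric point of ℓ∞(K,X). -/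
/-!
For small `t > 0` the norm of `f + t • g` is attained at `k₀`, so the one-sided derivative of
`t ↦ ‖f + t • g‖` at `0` is that of `t ↦ ‖f k₀ + t • g k₀‖`; hence `f k₀ ⊥_{ρ₊} g k₀`, and by
left symmetry of `f k₀` also `g k₀ ⊥_{ρ₊} f k₀`. Conversely `‖g + t • f‖` is the maximum of
`‖g k₀ + t • f k₀‖` and the constant `sup_{k ≠ k₀} ‖g k‖`; since `max · M` is `1`-Lipschitz,
this maximum inherits a vanishing right derivative, unless `g k₀ = 0`, in which case
`‖g + t • f‖ = ‖g‖` for small `t`.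
-/

open Filter Topology Set Metric NormedSpace
open scoped ENNReal

noncomputable section

section NormSlope

variable {E : Type*} [NormedAddCommGroup E] [NormedSpace ℝ E]

def normSlope (x y : E) (t : ℝ) : ℝ :=
  (‖x + t • y‖ - ‖x‖) / t

theorem normSlope_eq_slope (x y : E) (t : ℝ) :
    normSlope x y t = slope (fun s : ℝ => ‖x + s • y‖) 0 t := by
  rw [slope_def_field]
  simp only [normSlope, zero_smul, add_zero, sub_zero]

theorem convexOn_norm_add_smul (x y : E) : ConvexOn ℝ univ fun s : ℝ => ‖x + s • y‖ := by
  have h := convexOn_univ_norm.comp_affineMap (AffineMap.lineMap (k := ℝ) x (x + y))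
  have hline : norm ∘ AffineMap.lineMap (k := ℝ) x (x + y) = fun s : ℝ => ‖x + s • y‖ := by
    funext s
    simp [AffineMap.lineMap_apply, add_comm]
  rwa [preimage_univ, hline] at h

theorem monotoneOn_normSlope (x y : E) : MonotoneOn (normSlope x y) (Ioi 0) := by
  intro s hs t ht hst
  simp only [normSlope_eq_slope]
  exact (convexOn_norm_add_smul x y).slope_mono (mem_univ 0) ⟨trivial, hs.ne'⟩ ⟨trivial, ht.ne'⟩
    hst

theorem neg_norm_le_normSlope (x y : E) {t : ℝ} (ht : 0 < t) : -‖y‖ ≤ normSlope x y t := by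
  have h := abs_le.1 (abs_norm_sub_norm_le (x + t • y) x)
  rw [add_sub_cancel_left, norm_smul, Real.norm_of_nonneg ht.le] at h
  rw [normSlope, le_div_iff₀ ht]
  linarith

theorem exists_tendsto_normSlope (x y : E) : ∃ L, Tendsto (normSlope x y) (𝓝[>] 0) (𝓝 L) :=
  ⟨_, (monotoneOn_normSlope x y).tendsto_nhdsGT
    ⟨-‖y‖, by rintro _ ⟨t, ht, rfl⟩; exact neg_norm_le_normSlope x y ht⟩⟩

theorem rhoPlus_eq_zero_iff {x y : E} :
    rhoPlus x y = 0 ↔ x = 0 ∨ Tendsto (normSlope x y) (𝓝[>] 0) (𝓝 0) := by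
  obtain ⟨L, hL⟩ := exists_tendsto_normSlope x y
  have hρ : rhoPlus x y = ‖x‖ * L := congrArg (‖x‖ * ·) hL.limUnder_eq
  rw [hρ, mul_eq_zero, norm_eq_zero]
  exact or_congr_right ⟨fun h => h ▸ hL, tendsto_nhds_unique hL⟩

end NormSlope

theorem eventually_mul_lt_nhdsGT (c : ℝ) {b : ℝ} (hb : 0 < b) :
    ∀ᶠ t in 𝓝[>] (0 : ℝ), t * c < b := by
  have h := (continuous_mul_const c).tendsto' 0 0 (zero_mul c)
  exact nhdsWithin_le_nhds (h.eventually (eventually_lt_nhds hb))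

theorem tendsto_max_sub_div_nhdsGT {φ : ℝ → ℝ} {a : ℝ} (M : ℝ)
    (h : Tendsto (fun t => (φ t - a) / t) (𝓝[>] 0) (𝓝 0)) :
    Tendsto (fun t => (max (φ t) M - max a M) / t) (𝓝[>] 0) (𝓝 0) := by
  refine squeeze_zero_norm (fun t => ?_) (tendsto_zero_iff_norm_tendsto_zero.1 h)
  simp only [norm_div]
  exact div_le_div_of_nonneg_right (abs_max_sub_max_le_abs _ _ _) (norm_nonneg t)

section LInfty

variable {K : Type*} {E : K → Type*} [∀ k, NormedAddCommGroup (E k)]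

theorem lp.norm_eq_norm_apply_of_forall_le {u : lp E ∞} {k₀ : K} (h : ∀ k, ‖u k‖ ≤ ‖u k₀‖) :
    ‖u‖ = ‖u k₀‖ :=
  le_antisymm (lp.norm_le_of_forall_le (norm_nonneg _) h)
    (lp.norm_apply_le_norm ENNReal.top_ne_zero u k₀)

theorem lp.norm_eq_max_iSup_ne (u : lp E ∞) (k₀ : K) :
    ‖u‖ = max ‖u k₀‖ (⨆ k : {k // k ≠ k₀}, ‖u k‖) := by
  have hle : ∀ k, ‖u k‖ ≤ ‖u‖ := lp.norm_apply_le_norm ENNReal.top_ne_zero u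
  refine le_antisymm (lp.norm_le_of_forall_le (le_max_of_le_left (norm_nonneg _)) fun k => ?_)
    (max_le (hle k₀) (Real.iSup_le (fun k => hle k) (norm_nonneg u)))
  by_cases hk : k = k₀
  · exact hk ▸ le_max_left _ _
  · have hbdd : BddAbove (range fun k : {k // k ≠ k₀} => ‖u k‖) :=
      ⟨‖u‖, by rintro _ ⟨k, rfl⟩; exact hle k⟩
    exact le_max_of_le_right (le_ciSup hbdd ⟨k, hk⟩)

variable [∀ k, NormedSpace ℝ (E k)] {f : lp E ∞} {k₀ : K}

theorem lp.norm_add_smul_eq_max_of_forall_ne_eq_zero (hf : ∀ k, k ≠ k₀ → f k = 0) (g : lp E ∞)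
    (t : ℝ) :
    ‖g + t • f‖ = max ‖g k₀ + t • f k₀‖ (⨆ k : {k // k ≠ k₀}, ‖g k‖) := by
  rw [lp.norm_eq_max_iSup_ne _ k₀]
  simp only [lp.coeFn_add, lp.coeFn_smul, Pi.add_apply, Pi.smul_apply]
  congr 1
  exact iSup_congr fun k => by rw [hf k k.2, smul_zero, add_zero]

theorem lp.norm_add_smul_eq_norm_apply (hf : ∀ k, k ≠ k₀ → f k = 0) {g : lp E ∞} {t : ℝ}
    (ht : 0 ≤ t) (htg : t * (2 * ‖g‖) ≤ ‖f k₀‖) : ‖f + t • g‖ = ‖(f + t • g) k₀‖ := by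
  refine lp.norm_eq_norm_apply_of_forall_le fun k => ?_
  by_cases hk : k = k₀
  · rw [hk]
  have hle : ∀ k, ‖t • g k‖ ≤ t * ‖g‖ := fun k => by
    rw [norm_smul, Real.norm_of_nonneg ht]
    exact mul_le_mul_of_nonneg_left (lp.norm_apply_le_norm ENNReal.top_ne_zero g k) ht
  have := norm_sub_le_norm_add (f k₀) (t • g k₀)
  simp only [lp.coeFn_add, lp.coeFn_smul, Pi.add_apply, Pi.smul_apply, hf k hk, zero_add]
  linarith [hle k, hle k₀]

theorem lp.rhoPlus_eq_zero_of_apply_eq_zero (hf : ∀ k, k ≠ k₀ → f k = 0) {g : lp E ∞}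
    (hg : g k₀ = 0) : rhoPlus g f = 0 := by
  rw [rhoPlus_eq_zero_iff]
  by_cases hg0 : g = 0
  · exact Or.inl hg0
  have hM : ‖g‖ = ⨆ k : {k // k ≠ k₀}, ‖g k‖ := by
    rw [lp.norm_eq_max_iSup_ne g k₀, norm_eq_zero.2 hg,
      max_eq_right (Real.iSup_nonneg fun _ => norm_nonneg _)]
  refine Or.inr (tendsto_const_nhds.congr' ?_)
  filter_upwards [eventually_mul_lt_nhdsGT ‖f k₀‖ (norm_pos_iff.2 hg0), self_mem_nhdsWithin]
    with t hsmall ht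
  rw [normSlope, lp.norm_add_smul_eq_max_of_forall_ne_eq_zero hf, hg, zero_add, ← hM, norm_smul,
    Real.norm_of_nonneg ht.le, max_eq_right hsmall.le, sub_self, zero_div]

end LInfty

theorem stmt9_general {K : Type*} {X : Type*}
    [NormedAddCommGroup X] [NormedSpace ℝ X]
    (f : lp (fun _ : K => X) ∞) (hf : ‖f‖ = 1) (k₀ : K)
    (h1 : ‖f k₀‖ = 1) (h2 : ∀ k : K, k ≠ k₀ → f k = 0)
    (h3 : ∀ y : X, rhoPlus (f k₀) y = 0 → rhoPlus y (f k₀) = 0) :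
    ∀ g : lp (fun _ : K => X) ∞, rhoPlus f g = 0 → rhoPlus g f = 0 := by
  intro g hg
  have hf0 : f ≠ 0 := by
    rintro rfl
    simp at hf
  have hslope : Tendsto (normSlope (f k₀) (g k₀)) (𝓝[>] 0) (𝓝 0) := by
    refine ((rhoPlus_eq_zero_iff.1 hg).resolve_left hf0).congr' ?_
    filter_upwards [eventually_mul_lt_nhdsGT (2 * ‖g‖) one_pos, self_mem_nhdsWithin]
      with t hsmall ht
    rw [normSlope, normSlope, hf, h1,
      lp.norm_add_smul_eq_norm_apply h2 ht.le (h1 ▸ hsmall.le)]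
    rfl
  rcases rhoPlus_eq_zero_iff.1 (h3 _ (rhoPlus_eq_zero_iff.2 (Or.inr hslope))) with hg0 | hslope'
  · exact lp.rhoPlus_eq_zero_of_apply_eq_zero h2 hg0
  · refine rhoPlus_eq_zero_iff.2 (Or.inr ?_)
    refine (tendsto_max_sub_div_nhdsGT (φ := fun t => ‖g k₀ + t • f k₀‖)
      (⨆ k : {k // k ≠ k₀}, ‖g k‖) hslope').congr fun t => ?_
    rw [normSlope, lp.norm_add_smul_eq_max_of_forall_ne_eq_zero h2, lp.norm_eq_max_iSup_ne g k₀]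

theorem stmt9 {K : Type*} [Nonempty K] {X : Type*}
    [NormedAddCommGroup X] [NormedSpace ℝ X] [CompleteSpace X]
    (f : lp (fun _ : K => X) ∞) (hf : ‖f‖ = 1) (k₀ : K)
    (h1 : ‖f k₀‖ = 1) (h2 : ∀ k : K, k ≠ k₀ → f k = 0)
    (h3 : ∀ y : X, rhoPlus (f k₀) y = 0 → rhoPlus y (f k₀) = 0) :
    ∀ g : lp (fun _ : K => X) ∞, rhoPlus f g = 0 → rhoPlus g f = 0 :=
  stmt9_general f hf k₀ h1 h2 h3
end
end
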